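/- Let V be a finite-dimensional vector space over a field K and ρ : V ⊗ V → V ⊗ V an invertible solution of the Yang–Baxter equation such that the partial transpose ρ^{t₁} (transpose in the first tensor factor, a map V* ⊗ V → V ⊗ V* after appropriate identification) of both ρ and ρ⁻¹ is invertible. Then V* ≅ V-dual on both sides via the modified evaluation and coevaluation: setting ρ± to be the partial transposes of ρ^{±1}, the maps η̄ = ρ₋⁻¹ ∘ coev : K → V ⊗ V* and ε̄ = eval ∘ ρ₊⁻¹ : V* ⊗ V → K satisfy the zig-zag identities (id_V ⊗ ε̄) ∘ (η̄ ⊗ id_V) = id_V and (ε̄ ⊗ id_{V*}) ∘ (id_{V*} ⊗ η̄) = id_{V*}. -/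

import Mathlib

open TensorProduct

namespace Stmt11

variable {K V : Type*} [Field K] [AddCommGroup V] [Module K V] [FiniteDimensional K V]

/-- The canonical coevaluation `K → V* ⊗ V`, `1 ↦ Σ wⁱ ⊗ v_i`. -/
noncomputable def coevV : K →ₗ[K] Module.Dual K V ⊗[K] V :=
  (TensorProduct.comm K V (Module.Dual K V)).toLinearMap ∘ₗ coevaluation K V

/-- The partial transpose `l_p` (in the first tensor factor) of a linear map
`f : V ⊗ U → W ⊗ V`, with respect to the canonical duality `p = ⟨V, V*, coev, eval⟩`;
it is the composition `a_p ∘ b_p⁻¹`, a map `U ⊗ V* → V* ⊗ W`. -/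
noncomputable def lp {U W : Type*} [AddCommGroup U] [Module K U]
    [AddCommGroup W] [Module K W] (f : V ⊗[K] U →ₗ[K] W ⊗[K] V) :
    U ⊗[K] Module.Dual K V →ₗ[K] Module.Dual K V ⊗[K] W :=
  LinearMap.lTensor (Module.Dual K V)
      ((TensorProduct.rid K W).toLinearMap ∘ₗ
        LinearMap.lTensor W (contractRight K V) ∘ₗ
          (TensorProduct.assoc K W V (Module.Dual K V)).toLinearMap ∘ₗ
            LinearMap.rTensor (Module.Dual K V) f ∘ₗ
              (TensorProduct.assoc K V U (Module.Dual K V)).symm.toLinearMap) ∘ₗ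
    (TensorProduct.assoc K (Module.Dual K V) V
        (U ⊗[K] Module.Dual K V)).toLinearMap ∘ₗ
      LinearMap.rTensor (U ⊗[K] Module.Dual K V) (coevV (K := K) (V := V)) ∘ₗ
        (TensorProduct.lid K (U ⊗[K] Module.Dual K V)).symm.toLinearMap

/-- `f ⊗ id` on `(V ⊗ V) ⊗ V`. -/
noncomputable def Y1 (f : V ⊗[K] V →ₗ[K] V ⊗[K] V) :
    (V ⊗[K] V) ⊗[K] V →ₗ[K] (V ⊗[K] V) ⊗[K] V := LinearMap.rTensor V f

/-- `id ⊗ f` on `(V ⊗ V) ⊗ V`. -/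
noncomputable def Y2 (f : V ⊗[K] V →ₗ[K] V ⊗[K] V) :
    (V ⊗[K] V) ⊗[K] V →ₗ[K] (V ⊗[K] V) ⊗[K] V :=
  (TensorProduct.assoc K V V V).symm.toLinearMap ∘ₗ LinearMap.lTensor V f ∘ₗ
    (TensorProduct.assoc K V V V).toLinearMap

end Stmt11

/-!
Fix a basis `(e_i)` of `V`, write `ρ (e_i ⊗ e_j) = Σ ρ^{km}_{ij} e_k ⊗ e_m`, let `u` be the matrix
of `ε̄` on `V* ⊗ V` and `h` the coordinate matrix of `η̄ 1 ∈ V ⊗ V*`. The two zig-zag identities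
say `h u = 1` and `u h = 1`, and for square matrices either one implies the other.

From `ε̄ ∘ ρ₊ = eval`, contracting the first strand of `ρ` against `u` gives the identity,
`Σ u_{ik} ρ^{km}_{ij} = δ_{jm}`; from `ρ₋ ∘ η̄ = coev`, `Σ (ρ⁻¹)^{pq}_{kl} h_{lq} = δ_{kp}`.
Conjugating the braid relation by `ρ⁻¹` gives `(ρ⁻¹ ⊗ 1)(1 ⊗ ρ)(ρ ⊗ 1) = (1 ⊗ ρ)(ρ ⊗ 1)(1 ⊗ ρ⁻¹)`.
Contracting the first strand of both sides against `u` collapses the right side to `ρ ρ⁻¹ = 1`.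
The left side factors through `ρ₊`, and cancelling it with `ρ₊⁻¹` leaves
`Σ u_{ap} (ρ⁻¹)^{pq}_{kl} ρ^{km}_{aj} = δ_{jq} u_{ml}`; contracting this with `h` gives `u h = 1`.
-/

namespace Stmt11

open Matrix
open scoped Kronecker

section Matrices

variable {ι κ τ R : Type*} [Fintype ι] [DecidableEq ι] [CommRing R]

def partialTranspose (A : Matrix (κ × ι) (ι × τ) R) : Matrix (ι × κ) (τ × ι) R :=
  of fun (i, k) (j, m) => A (k, m) (i, j)

def oneKronecker (A : Matrix (ι × ι) (ι × ι) R) : Matrix ((ι × ι) × ι) ((ι × ι) × ι) R :=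
  ((1 : Matrix ι ι R) ⊗ₖ A).submatrix (Equiv.prodAssoc ι ι ι) (Equiv.prodAssoc ι ι ι)

/-- If `P` is the matrix of a map `g` into `V ⊗ V*`, then `evalComp P a c` is the value of
`eval ∘ g` on the `(a, c)`-th basis vector. -/
def evalComp (P : Matrix (ι × ι) (κ × τ) R) : Matrix κ τ R :=
  of fun a c => ∑ j, P (j, j) (a, c)

/-- If `M` is the matrix of a map `g` out of `V* ⊗ V`, then `compCoev M` holds the coordinates
of `g (coev 1)`. -/
def compCoev (M : Matrix (κ × τ) (ι × ι) R) : Matrix κ τ R :=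
  of fun j m => ∑ i, M (j, m) (i, i)

theorem evalComp_apply_eq_vecMul (P : Matrix (ι × ι) (κ × τ) R) (a : κ) (c : τ) :
    evalComp P a c = (vec (1 : Matrix ι ι R) ᵥ* P) (a, c) := by
  simp [evalComp, vecMul, dotProduct, Fintype.sum_prod_type, one_apply]

variable (A B P M : Matrix (ι × ι) (ι × ι) R)

theorem sum_evalComp_mul_eq_one (hPA : P * partialTranspose A = 1) (j m : ι) :
    ∑ i, ∑ k, evalComp P i k * A (k, m) (i, j) = (1 : Matrix ι ι R) j m := by
  calc _ = (vec (1 : Matrix ι ι R) ᵥ* P ᵥ* partialTranspose A) (j, m) := by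
        simp [vecMul, dotProduct, Fintype.sum_prod_type, evalComp_apply_eq_vecMul,
          partialTranspose]
    _ = _ := by rw [vecMul_vecMul, hPA, vecMul_one, vec]; simp [one_apply, eq_comm]

theorem sum_mul_compCoev_eq_one (hBM : partialTranspose B * M = 1) (k p : ι) :
    ∑ l, ∑ q, B (p, q) (k, l) * compCoev M l q = (1 : Matrix ι ι R) k p := by
  calc _ = (partialTranspose B *ᵥ (M *ᵥ vec (1 : Matrix ι ι R))) (k, p) := by
        simp [mulVec, dotProduct, Fintype.sum_prod_type, compCoev, partialTranspose, one_apply]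
    _ = _ := by rw [mulVec_mulVec, hBM, one_mulVec, vec]; simp [one_apply, eq_comm]

theorem mixed_ybe_apply
    (hybe : (B ⊗ₖ 1) * oneKronecker A * (A ⊗ₖ 1) = oneKronecker A * (A ⊗ₖ 1) * oneKronecker B)
    (a j j' p q n : ι) :
    ∑ k, ∑ m, (∑ l, B (p, q) (k, l) * A (l, n) (m, j')) * A (k, m) (a, j) =
      ∑ β, ∑ γ, (∑ μ, A (q, n) (μ, γ) * A (p, μ) (a, β)) * B (β, γ) (j, j') := by
  simpa [mul_apply, Fintype.sum_prod_type, oneKronecker, one_apply, ite_mul,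
    Finset.sum_ite_eq] using congrFun (congrFun hybe ((p, q), n)) ((a, j), j')

theorem contract_mixed_ybe (u : Matrix ι ι R) (hAB : A * B = 1)
    (hybe : (B ⊗ₖ 1) * oneKronecker A * (A ⊗ₖ 1) = oneKronecker A * (A ⊗ₖ 1) * oneKronecker B)
    (hu : ∀ j m, ∑ i, ∑ k, u i k * A (k, m) (i, j) = (1 : Matrix ι ι R) j m) (j j' q n : ι) :
    ∑ a, ∑ p, u a p * ∑ k, ∑ m, (∑ l, B (p, q) (k, l) * A (l, n) (m, j')) * A (k, m) (a, j) =
      (1 : Matrix (ι × ι) (ι × ι) R) (q, n) (j, j') := by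
  calc _ = ∑ β, ∑ γ, ∑ μ, (∑ a, ∑ p, u a p * A (p, μ) (a, β)) * A (q, n) (μ, γ) *
        B (β, γ) (j, j') := by
        simp only [mixed_ybe_apply A B hybe]
        simp only [Finset.mul_sum, Finset.sum_mul]
        rw [Finset.sum_comm_cycle]; refine Finset.sum_congr rfl fun β _ => ?_
        rw [Finset.sum_comm_cycle]; refine Finset.sum_congr rfl fun γ _ => ?_
        rw [Finset.sum_comm_cycle]; refine Finset.sum_congr rfl fun μ _ => ?_
        exact Finset.sum_congr rfl fun a _ => Finset.sum_congr rfl fun p _ => by ring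
    _ = ∑ β, ∑ γ, A (q, n) (β, γ) * B (β, γ) (j, j') := by
        simp only [hu, one_apply, ite_mul, one_mul, zero_mul, Finset.sum_ite_eq,
          if_pos (Finset.mem_univ _)]
    _ = _ := by rw [← hAB, mul_apply, Fintype.sum_prod_type]

theorem contract_braiding_inverse (hAB : A * B = 1)
    (hybe : (B ⊗ₖ 1) * oneKronecker A * (A ⊗ₖ 1) = oneKronecker A * (A ⊗ₖ 1) * oneKronecker B)
    (hAP : partialTranspose A * P = 1) (hPA : P * partialTranspose A = 1) (j q m l : ι) :
    ∑ a, ∑ p, ∑ k, evalComp P a p * A (k, m) (a, j) * B (p, q) (k, l) =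
      (1 : Matrix ι ι R) j q * evalComp P m l := by
  set X : ι × ι → R := fun y =>
    ∑ a, ∑ p, ∑ k, evalComp P a p * A (k, y.1) (a, j) * B (p, q) (k, y.2)
  have hX : X ᵥ* partialTranspose A =
      fun y => (1 : Matrix (ι × ι) (ι × ι) R) (q, y.2) (j, y.1) := by
    ext ⟨j', n⟩
    rw [← contract_mixed_ybe A B (evalComp P) hAB hybe (sum_evalComp_mul_eq_one A P hPA)]
    simp only [X, vecMul, dotProduct, Fintype.sum_prod_type, partialTranspose, of_apply,
      Finset.mul_sum, Finset.sum_mul]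
    rw [Finset.sum_comm_cycle]; refine Finset.sum_congr rfl fun a _ => ?_
    rw [Finset.sum_comm_cycle]; refine Finset.sum_congr rfl fun p _ => ?_
    rw [Finset.sum_comm_cycle]; refine Finset.sum_congr rfl fun k _ => ?_
    exact Finset.sum_congr rfl fun m _ => Finset.sum_congr rfl fun l _ => by ring
  calc _ = (X ᵥ* partialTranspose A ᵥ* P) (m, l) := by rw [vecMul_vecMul, hAP, vecMul_one]
    _ = _ := by
      rw [hX]
      by_cases hjq : j = q <;>
        simp [hjq, vecMul, dotProduct, Fintype.sum_prod_type, one_apply, evalComp, eq_comm]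

theorem evalComp_mul_compCoev_eq_one (hAB : A * B = 1)
    (hybe : (B ⊗ₖ 1) * oneKronecker A * (A ⊗ₖ 1) = oneKronecker A * (A ⊗ₖ 1) * oneKronecker B)
    (hAP : partialTranspose A * P = 1) (hPA : P * partialTranspose A = 1)
    (hBM : partialTranspose B * M = 1) :
    evalComp P * compCoev M = 1 := by
  ext m j
  calc (evalComp P * compCoev M) m j
      = ∑ l, ∑ q, (1 : Matrix ι ι R) j q * evalComp P m l * compCoev M l q := by
        simp [mul_apply, one_apply]
    _ = ∑ a, ∑ p, ∑ k, evalComp P a p * A (k, m) (a, j) *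
          ∑ l, ∑ q, B (p, q) (k, l) * compCoev M l q := by
        simp only [← contract_braiding_inverse A B P hAB hybe hAP hPA, Finset.mul_sum,
          Finset.sum_mul]
        rw [Finset.sum_comm_cycle]; refine Finset.sum_congr rfl fun a _ => ?_
        rw [Finset.sum_comm_cycle]; refine Finset.sum_congr rfl fun p _ => ?_
        rw [Finset.sum_comm_cycle]; refine Finset.sum_congr rfl fun k _ => ?_
        exact Finset.sum_congr rfl fun l _ => Finset.sum_congr rfl fun q _ => by ring
    _ = ∑ a, ∑ k, evalComp P a k * A (k, m) (a, j) := by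
        simp [sum_mul_compCoev_eq_one B M hBM, one_apply]
    _ = (1 : Matrix ι ι R) m j := by
        simp [sum_evalComp_mul_eq_one A P hPA, one_apply, eq_comm]

end Matrices

section Tensors

variable {R M N P W ι κ τ : Type*} [CommRing R] [AddCommGroup M] [Module R M]
  [AddCommGroup N] [Module R N] [AddCommGroup P] [Module R P] [AddCommGroup W] [Module R W]

theorem rid_lTensor_assoc_tmul (y : W ⊗[R] M) (φ : Module.Dual R M) :
    TensorProduct.rid R W (LinearMap.lTensor W (contractRight R M)
        (TensorProduct.assoc R W M _ (y ⊗ₜ φ))) =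
      TensorProduct.rid R W (LinearMap.lTensor W φ y) := by
  induction y using TensorProduct.induction_on with
  | zero => simp
  | tmul w v => simp [contractRight_apply]
  | add y y' hy hy' => simp only [add_tmul, map_add, hy, hy']

theorem repr_rid_lTensor_coord (b : Module.Basis ι R M) (bW : Module.Basis κ R W)
    (y : W ⊗[R] M) (k : κ) (m : ι) :
    bW.repr (TensorProduct.rid R W (LinearMap.lTensor W (b.coord m) y)) k =
      (bW.tensorProduct b).repr y (k, m) := by
  induction y using TensorProduct.induction_on with
  | zero => simp
  | tmul w v => simp
  | add y y' hy hy' => simp only [map_add, Finsupp.add_apply, hy, hy']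

theorem repr_assoc_symm_tmul (bM : Module.Basis ι R M) (bN : Module.Basis κ R N)
    (bP : Module.Basis τ R P) (x : M) (y : N ⊗[R] P) (i : ι) (j : κ) (k : τ) :
    ((bM.tensorProduct bN).tensorProduct bP).repr
        ((TensorProduct.assoc R M N P).symm (x ⊗ₜ y)) ((i, j), k) =
      bM.repr x i * (bN.tensorProduct bP).repr y (j, k) := by
  induction y using TensorProduct.induction_on with
  | zero => simp
  | tmul n p => simp only [assoc_symm_tmul, Module.Basis.tensorProduct_repr_tmul_apply]; ring
  | add y y' hy hy' => simp only [tmul_add, map_add, Finsupp.add_apply, hy, hy', mul_add]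

end Tensors

section Pairing

variable {ι R M : Type*} [Fintype ι] [DecidableEq ι] [CommRing R] [AddCommGroup M] [Module R M]
  (b : Module.Basis ι R M)

noncomputable def evalMatrix (ε : Module.Dual R M ⊗[R] M →ₗ[R] R) : Matrix ι ι R :=
  of fun a c => ε (b.dualBasis a ⊗ₜ b c)

noncomputable def coevMatrix (η : R →ₗ[R] M ⊗[R] Module.Dual R M) : Matrix ι ι R :=
  of fun j m => (b.tensorProduct b.dualBasis).repr (η 1) (j, m)

theorem sum_coevMatrix_smul (η : R →ₗ[R] M ⊗[R] Module.Dual R M) :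
    ∑ j, ∑ m, coevMatrix b η j m • (b j ⊗ₜ b.dualBasis m) = η 1 := by
  conv_rhs => rw [← (b.tensorProduct b.dualBasis).sum_repr (η 1)]
  simp only [Fintype.sum_prod_type, Module.Basis.tensorProduct_apply, coevMatrix, of_apply]

theorem zigzag_left_eq_id (η : R →ₗ[R] M ⊗[R] Module.Dual R M)
    (ε : Module.Dual R M ⊗[R] M →ₗ[R] R) (h : coevMatrix b η * evalMatrix b ε = 1) :
    (TensorProduct.rid R M).toLinearMap ∘ₗ LinearMap.lTensor M ε ∘ₗ
        (TensorProduct.assoc R M (Module.Dual R M) M).toLinearMap ∘ₗ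
          LinearMap.rTensor M η ∘ₗ (TensorProduct.lid R M).symm.toLinearMap = LinearMap.id := by
  refine b.ext fun c => ?_
  calc _ = ∑ j, (coevMatrix b η * evalMatrix b ε) j c • b j := by
        simp [← sum_coevMatrix_smul b η, sum_tmul, smul_tmul', mul_apply, Finset.sum_smul,
          smul_smul, evalMatrix, mul_comm]
    _ = b c := by simp [h, one_apply]

theorem zigzag_right_eq_id (η : R →ₗ[R] M ⊗[R] Module.Dual R M)
    (ε : Module.Dual R M ⊗[R] M →ₗ[R] R) (h : evalMatrix b ε * coevMatrix b η = 1) :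
    (TensorProduct.lid R (Module.Dual R M)).toLinearMap ∘ₗ
        LinearMap.rTensor (Module.Dual R M) ε ∘ₗ
          (TensorProduct.assoc R (Module.Dual R M) M (Module.Dual R M)).symm.toLinearMap ∘ₗ
            LinearMap.lTensor (Module.Dual R M) η ∘ₗ
              (TensorProduct.rid R (Module.Dual R M)).symm.toLinearMap = LinearMap.id := by
  refine b.dualBasis.ext fun a => ?_
  calc _ = ∑ m, (evalMatrix b ε * coevMatrix b η) a m • b.dualBasis m := by
        simp only [Module.Basis.coe_dualBasis, LinearMap.coe_comp, LinearEquiv.coe_coe,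
          Function.comp_apply, rid_symm_apply, LinearMap.lTensor_tmul, ← sum_coevMatrix_smul b η,
          tmul_sum, tmul_smul, map_sum, map_smul, assoc_symm_tmul, LinearMap.rTensor_tmul, lid_tmul,
          smul_smul, evalMatrix, mul_apply, of_apply, mul_comm, Finset.sum_smul]
        exact Finset.sum_comm
    _ = b.dualBasis a := by simp [h, one_apply]

theorem contractRight_eq_sum_repr (x : M ⊗[R] Module.Dual R M) :
    contractRight R M x = ∑ j, (b.tensorProduct b.dualBasis).repr x (j, j) := by
  induction x using TensorProduct.induction_on with
  | zero => simp
  | tmul m φ =>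
    simp only [contractRight_apply, Module.Basis.tensorProduct_repr_tmul_apply,
      Module.Basis.dualBasis_repr]
    conv_lhs => rw [← b.sum_repr m]
    simp only [map_sum, map_smul, smul_eq_mul, mul_comm]
  | add x y hx hy => simp only [map_add, hx, hy, Finsupp.add_apply, Finset.sum_add_distrib]

theorem evalMatrix_contractRight_comp
    (g : Module.Dual R M ⊗[R] M →ₗ[R] M ⊗[R] Module.Dual R M) :
    evalMatrix b (contractRight R M ∘ₗ g) = evalComp
      (LinearMap.toMatrix (b.dualBasis.tensorProduct b) (b.tensorProduct b.dualBasis) g) := by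
  ext a c
  simp [evalMatrix, evalComp, LinearMap.toMatrix_apply, contractRight_eq_sum_repr b]

theorem dualTensorHom_sum_dualBasis_tmul :
    dualTensorHom R M M (∑ i, b.dualBasis i ⊗ₜ b i) = LinearMap.id :=
  b.ext fun j => by simp [dualTensorHom_apply, Finsupp.single_apply]

end Pairing

section Braid

variable {F W ι : Type*} [Field F] [AddCommGroup W] [Module F W] [Fintype ι] [DecidableEq ι]

theorem Y1_comp (f g : W ⊗[F] W →ₗ[F] W ⊗[F] W) : Y1 (f ∘ₗ g) = Y1 f ∘ₗ Y1 g :=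
  LinearMap.rTensor_comp W f g

theorem Y2_comp (f g : W ⊗[F] W →ₗ[F] W ⊗[F] W) : Y2 (f ∘ₗ g) = Y2 f ∘ₗ Y2 g :=
  LinearMap.ext fun x => by simp [Y2, LinearMap.lTensor_comp]

theorem Y1_id : Y1 (LinearMap.id : W ⊗[F] W →ₗ[F] W ⊗[F] W) = LinearMap.id :=
  LinearMap.rTensor_id W _

theorem Y2_id : Y2 (LinearMap.id : W ⊗[F] W →ₗ[F] W ⊗[F] W) = LinearMap.id :=
  LinearMap.ext fun x => by simp [Y2]

theorem ybe_conj_inv {ρ ρ' : W ⊗[F] W →ₗ[F] W ⊗[F] W}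
    (hρ : ρ ∘ₗ ρ' = LinearMap.id) (hρ' : ρ' ∘ₗ ρ = LinearMap.id)
    (ybe : Y1 ρ ∘ₗ Y2 ρ ∘ₗ Y1 ρ = Y2 ρ ∘ₗ Y1 ρ ∘ₗ Y2 ρ) :
    Y1 ρ' ∘ₗ Y2 ρ ∘ₗ Y1 ρ = Y2 ρ ∘ₗ Y1 ρ ∘ₗ Y2 ρ' :=
  calc Y1 ρ' ∘ₗ Y2 ρ ∘ₗ Y1 ρ = Y1 ρ' ∘ₗ (Y2 ρ ∘ₗ Y1 ρ ∘ₗ Y2 ρ) ∘ₗ Y2 ρ' := by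
        simp only [LinearMap.comp_assoc, ← Y2_comp, hρ, Y2_id, LinearMap.comp_id]
    _ = Y2 ρ ∘ₗ Y1 ρ ∘ₗ Y2 ρ' := by
        rw [← ybe]
        simp only [← LinearMap.comp_assoc, ← Y1_comp, hρ', Y1_id, LinearMap.id_comp]

theorem toMatrix_Y1 (b : Module.Basis ι F W) (f : W ⊗[F] W →ₗ[F] W ⊗[F] W) :
    LinearMap.toMatrix ((b.tensorProduct b).tensorProduct b) ((b.tensorProduct b).tensorProduct b)
        (Y1 f) = LinearMap.toMatrix (b.tensorProduct b) (b.tensorProduct b) f ⊗ₖ 1 := by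
  rw [Y1, LinearMap.rTensor, TensorProduct.toMatrix_map, LinearMap.toMatrix_id]

theorem toMatrix_Y2 (b : Module.Basis ι F W) (f : W ⊗[F] W →ₗ[F] W ⊗[F] W) :
    LinearMap.toMatrix ((b.tensorProduct b).tensorProduct b) ((b.tensorProduct b).tensorProduct b)
        (Y2 f) = oneKronecker (LinearMap.toMatrix (b.tensorProduct b) (b.tensorProduct b) f) := by
  ext ⟨⟨i, j⟩, k⟩ ⟨⟨i', j'⟩, k'⟩
  simp [LinearMap.toMatrix_apply, Y2, oneKronecker, repr_assoc_symm_tmul, Finsupp.single_apply,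
    one_apply, eq_comm]

end Braid

variable {K V : Type*} [Field K] [AddCommGroup V] [Module K V] [FiniteDimensional K V]

theorem coevV_apply_one {ι : Type*} [Fintype ι] [DecidableEq ι] (b : Module.Basis ι K V) :
    coevV 1 = ∑ i, b.dualBasis i ⊗ₜ[K] b i := by
  classical
  apply (dualTensorHomEquivOfBasis (N := V) b).injective
  simp only [dualTensorHomEquivOfBasis_apply, dualTensorHom_sum_dualBasis_tmul]
  rw [← dualTensorHom_sum_dualBasis_tmul (Module.Basis.ofVectorSpace K V)]
  simp [coevV, coevaluation_apply_one]

theorem coevMatrix_comp_coevV {ι : Type*} [Fintype ι] [DecidableEq ι] (b : Module.Basis ι K V)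
    (g : Module.Dual K V ⊗[K] V →ₗ[K] V ⊗[K] Module.Dual K V) :
    coevMatrix b (g ∘ₗ coevV) = compCoev
      (LinearMap.toMatrix (b.dualBasis.tensorProduct b) (b.tensorProduct b.dualBasis) g) := by
  ext j m
  rw [coevMatrix, of_apply, LinearMap.comp_apply,
    ← LinearMap.toMatrix_mulVec_repr (b.dualBasis.tensorProduct b)]
  simp [compCoev, coevV_apply_one b, mulVec, dotProduct, Fintype.sum_prod_type,
    Finsupp.single_apply]

theorem lp_tmul {ι U W : Type*} [Fintype ι] [DecidableEq ι] [AddCommGroup U] [Module K U]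
    [AddCommGroup W] [Module K W] (b : Module.Basis ι K V) (f : V ⊗[K] U →ₗ[K] W ⊗[K] V)
    (u : U) (φ : Module.Dual K V) :
    lp f (u ⊗ₜ φ) =
      ∑ i, b.dualBasis i ⊗ₜ TensorProduct.rid K W (LinearMap.lTensor W φ (f (b i ⊗ₜ u))) := by
  simp [lp, coevV_apply_one b, sum_tmul, rid_lTensor_assoc_tmul]

theorem toMatrix_lp {ι τ κ U W : Type*} [Fintype ι] [DecidableEq ι] [Fintype τ] [DecidableEq τ]
    [Fintype κ] [DecidableEq κ] [AddCommGroup U] [Module K U] [AddCommGroup W] [Module K W]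
    (b : Module.Basis ι K V) (bU : Module.Basis τ K U) (bW : Module.Basis κ K W)
    (f : V ⊗[K] U →ₗ[K] W ⊗[K] V) :
    LinearMap.toMatrix (bU.tensorProduct b.dualBasis) (b.dualBasis.tensorProduct bW) (lp f) =
      partialTranspose (LinearMap.toMatrix (b.tensorProduct bU) (bW.tensorProduct b) f) := by
  ext ⟨i, k⟩ ⟨j, m⟩
  simp [LinearMap.toMatrix_apply, partialTranspose, lp_tmul b, Finsupp.single_apply,
    repr_rid_lTensor_coord]

theorem statement11_general (ρ ρ' : V ⊗[K] V →ₗ[K] V ⊗[K] V)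
    (hρ : ρ ∘ₗ ρ' = LinearMap.id) (hρ' : ρ' ∘ₗ ρ = LinearMap.id)
    (ybe : Y1 ρ ∘ₗ Y2 ρ ∘ₗ Y1 ρ = Y2 ρ ∘ₗ Y1 ρ ∘ₗ Y2 ρ)
    (ρpi ρmi : Module.Dual K V ⊗[K] V →ₗ[K] V ⊗[K] Module.Dual K V)
    (hp1 : lp (K := K) ρ ∘ₗ ρpi = LinearMap.id)
    (hp2 : ρpi ∘ₗ lp (K := K) ρ = LinearMap.id)
    (hm1 : lp (K := K) ρ' ∘ₗ ρmi = LinearMap.id)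
    :
    ∀ ηbar : K →ₗ[K] V ⊗[K] Module.Dual K V,
    ∀ εbar : Module.Dual K V ⊗[K] V →ₗ[K] K,
    ηbar = ρmi ∘ₗ coevV (K := K) (V := V) →
    εbar = contractRight K V ∘ₗ ρpi →
    ((TensorProduct.rid K V).toLinearMap ∘ₗ LinearMap.lTensor V εbar ∘ₗ
        (TensorProduct.assoc K V (Module.Dual K V) V).toLinearMap ∘ₗ
          LinearMap.rTensor V ηbar ∘ₗ (TensorProduct.lid K V).symm.toLinearMap =
      LinearMap.id) ∧
    ((TensorProduct.lid K (Module.Dual K V)).toLinearMap ∘ₗ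
        LinearMap.rTensor (Module.Dual K V) εbar ∘ₗ
          (TensorProduct.assoc K (Module.Dual K V) V
              (Module.Dual K V)).symm.toLinearMap ∘ₗ
            LinearMap.lTensor (Module.Dual K V) ηbar ∘ₗ
              (TensorProduct.rid K (Module.Dual K V)).symm.toLinearMap =
      LinearMap.id) := by
  intro ηbar εbar hη hε
  subst hη hε
  let b := Module.finBasis K V
  set A := LinearMap.toMatrix (b.tensorProduct b) (b.tensorProduct b) ρ
  set B := LinearMap.toMatrix (b.tensorProduct b) (b.tensorProduct b) ρ'
  set P := LinearMap.toMatrix (b.dualBasis.tensorProduct b) (b.tensorProduct b.dualBasis) ρpi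
  set M := LinearMap.toMatrix (b.dualBasis.tensorProduct b) (b.tensorProduct b.dualBasis) ρmi
  have hAB : A * B = 1 := by rw [← LinearMap.toMatrix_comp, hρ, LinearMap.toMatrix_id]
  have hAP : partialTranspose A * P = 1 := by
    rw [← toMatrix_lp, ← LinearMap.toMatrix_comp, hp1, LinearMap.toMatrix_id]
  have hPA : P * partialTranspose A = 1 := by
    rw [← toMatrix_lp, ← LinearMap.toMatrix_comp, hp2, LinearMap.toMatrix_id]
  have hBM : partialTranspose B * M = 1 := by
    rw [← toMatrix_lp, ← LinearMap.toMatrix_comp, hm1, LinearMap.toMatrix_id]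
  have hybe :
      (B ⊗ₖ 1) * oneKronecker A * (A ⊗ₖ 1) = oneKronecker A * (A ⊗ₖ 1) * oneKronecker B := by
    have := congrArg (LinearMap.toMatrix ((b.tensorProduct b).tensorProduct b)
      ((b.tensorProduct b).tensorProduct b)) (ybe_conj_inv hρ hρ' ybe)
    simpa only [LinearMap.toMatrix_comp ((b.tensorProduct b).tensorProduct b)
      ((b.tensorProduct b).tensorProduct b) ((b.tensorProduct b).tensorProduct b), toMatrix_Y1,
      toMatrix_Y2, Matrix.mul_assoc] using this
  have key := evalComp_mul_compCoev_eq_one A B P M hAB hybe hAP hPA hBM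
  rw [← evalMatrix_contractRight_comp, ← coevMatrix_comp_coevV] at key
  exact ⟨zigzag_left_eq_id b _ _ (mul_eq_one_comm.mp key), zigzag_right_eq_id b _ _ key⟩

/-- let `ρ` be an invertible solution of the Yang–Baxter equation on a
finite-dimensional vector space `V` such that the partial transposes of `ρ` and `ρ⁻¹`
are invertible.  With `ρ± = l_p(ρ^{±1})`, the morphisms `η̄ = ρ₋⁻¹ ∘ coev` and
`ε̄ = eval ∘ ρ₊⁻¹` satisfy the zig-zag identities, exhibiting `V*` as a two-sided dual
of `V`. -/
theorem statement11 (ρ ρ' : V ⊗[K] V →ₗ[K] V ⊗[K] V)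
    (hρ : ρ ∘ₗ ρ' = LinearMap.id) (hρ' : ρ' ∘ₗ ρ = LinearMap.id)
    (ybe : Y1 ρ ∘ₗ Y2 ρ ∘ₗ Y1 ρ = Y2 ρ ∘ₗ Y1 ρ ∘ₗ Y2 ρ)
    (ρpi ρmi : Module.Dual K V ⊗[K] V →ₗ[K] V ⊗[K] Module.Dual K V)
    (hp1 : lp (K := K) ρ ∘ₗ ρpi = LinearMap.id)
    (hp2 : ρpi ∘ₗ lp (K := K) ρ = LinearMap.id)
    (hm1 : lp (K := K) ρ' ∘ₗ ρmi = LinearMap.id)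
    (hm2 : ρmi ∘ₗ lp (K := K) ρ' = LinearMap.id) :
    ∀ ηbar : K →ₗ[K] V ⊗[K] Module.Dual K V,
    ∀ εbar : Module.Dual K V ⊗[K] V →ₗ[K] K,
    ηbar = ρmi ∘ₗ coevV (K := K) (V := V) →
    εbar = contractRight K V ∘ₗ ρpi →
    ((TensorProduct.rid K V).toLinearMap ∘ₗ LinearMap.lTensor V εbar ∘ₗ
        (TensorProduct.assoc K V (Module.Dual K V) V).toLinearMap ∘ₗ
          LinearMap.rTensor V ηbar ∘ₗ (TensorProduct.lid K V).symm.toLinearMap =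
      LinearMap.id) ∧
    ((TensorProduct.lid K (Module.Dual K V)).toLinearMap ∘ₗ
        LinearMap.rTensor (Module.Dual K V) εbar ∘ₗ
          (TensorProduct.assoc K (Module.Dual K V) V
              (Module.Dual K V)).symm.toLinearMap ∘ₗ
            LinearMap.lTensor (Module.Dual K V) ηbar ∘ₗ
              (TensorProduct.rid K (Module.Dual K V)).symm.toLinearMap =
      LinearMap.id) :=
  statement11_general ρ ρ' hρ hρ' ybe ρpi ρmi hp1 hp2 hm1

end Stmt11
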